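/- arXiv:2104.07842 — 5 statements merged into one kernel-verified Lean document; each statement's English description precedes it below -/
import Mathlib

section
/- Let T(z) = 1 - √(1-2z) and fix integers k ≥ 1 and n ≥ k. Then the coefficient of z^n in T(z)^k equals (k/n) · 2^{k-n} · C(2n-k-1, n-k), where C denotes the binomial coefficient. -/
/-!
The Taylor coefficients at a point of smooth functions multiply like formal power series, so the
Taylor series `T` of `1 - √(1 - 2z)` at `0` satisfies `T = X + T²/2` with `T(0) = 0`. Multiplying
by `T^k` gives `T^(k+1) = X T^k + T^(k+2)/2`; hence `b k d = 2^d [X^(k+d)] T^k` satisfies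
`b k 0 = 1`, `b 0 (d+1) = 0` and the Pascal-type recursion `b (k+1) (d+1) = b k (d+1) + b (k+2) d`,
which the ballot numbers `k/(k+d) · C(k+2d-1, d)` also satisfy.
-/

open PowerSeries Filter
open scoped Topology ContDiff Nat

section FormalTaylorSeries

variable {𝕜 : Type*} [NontriviallyNormedField 𝕜] {f g : 𝕜 → 𝕜} {x : 𝕜}

noncomputable def formalTaylorSeries (f : 𝕜 → 𝕜) (x : 𝕜) : 𝕜⟦X⟧ :=
  PowerSeries.mk fun n => iteratedDeriv n f x / n !

theorem coeff_formalTaylorSeries (n : ℕ) :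
    coeff n (formalTaylorSeries f x) = iteratedDeriv n f x / n ! :=
  coeff_mk _ _

theorem constantCoeff_formalTaylorSeries : constantCoeff (formalTaylorSeries f x) = f x := by
  simp [← coeff_zero_eq_constantCoeff_apply, coeff_formalTaylorSeries]

theorem Filter.EventuallyEq.formalTaylorSeries_eq (h : f =ᶠ[𝓝 x] g) :
    formalTaylorSeries f x = formalTaylorSeries g x := by
  ext n
  simp only [coeff_formalTaylorSeries, h.iteratedDeriv_eq n]

theorem formalTaylorSeries_id_zero : formalTaylorSeries (fun z : 𝕜 => z) 0 = X := by
  ext n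
  simp only [coeff_formalTaylorSeries, iteratedDeriv_fun_id_zero, coeff_X]
  split_ifs with hn <;> simp [hn]

theorem formalTaylorSeries_add (hf : ContDiffAt 𝕜 ∞ f x) (hg : ContDiffAt 𝕜 ∞ g x) :
    formalTaylorSeries (fun z => f z + g z) x = formalTaylorSeries f x + formalTaylorSeries g x := by
  ext n
  simp only [coeff_formalTaylorSeries, map_add, ← add_div]
  rw [iteratedDeriv_fun_add (hf.of_le (by exact_mod_cast le_top))
    (hg.of_le (by exact_mod_cast le_top))]

theorem formalTaylorSeries_div_const (c : 𝕜) :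
    formalTaylorSeries (fun z => f z / c) x = C c⁻¹ * formalTaylorSeries f x := by
  ext n
  simp only [coeff_formalTaylorSeries, coeff_C_mul, iteratedDeriv_div_const]
  ring

theorem formalTaylorSeries_mul [CharZero 𝕜] (hf : ContDiffAt 𝕜 ∞ f x) (hg : ContDiffAt 𝕜 ∞ g x) :
    formalTaylorSeries (fun z => f z * g z) x = formalTaylorSeries f x * formalTaylorSeries g x := by
  ext n
  rw [coeff_mul, Finset.Nat.sum_antidiagonal_eq_sum_range_succ_mk, coeff_formalTaylorSeries,
    iteratedDeriv_fun_mul (hf.of_le (by exact_mod_cast le_top))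
      (hg.of_le (by exact_mod_cast le_top)),
    Finset.sum_div]
  refine Finset.sum_congr rfl fun i hi => ?_
  have hin : i ≤ n := Nat.lt_succ_iff.mp (Finset.mem_range.mp hi)
  have hn : (n ! : 𝕜) ≠ 0 := Nat.cast_ne_zero.mpr n.factorial_ne_zero
  simp only [coeff_formalTaylorSeries]
  rw [Nat.cast_choose 𝕜 hin]
  field_simp

theorem formalTaylorSeries_pow [CharZero 𝕜] (hf : ContDiffAt 𝕜 ∞ f x) (k : ℕ) :
    formalTaylorSeries (fun z => f z ^ k) x = formalTaylorSeries f x ^ k := by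
  induction k with
  | zero =>
    ext n
    simp only [pow_zero, coeff_formalTaylorSeries, iteratedDeriv_const, coeff_one]
    split_ifs with hn <;> simp [hn]
  | succ k ih =>
    simp only [pow_succ]
    rw [formalTaylorSeries_mul (hf.pow k) hf, ih]

end FormalTaylorSeries

def ballot (k d : ℕ) : ℚ := k / (k + d) * (k + 2 * d - 1).choose d

theorem ballot_zero_left (d : ℕ) : ballot 0 d = 0 := by simp [ballot]

theorem ballot_zero_right {k : ℕ} (hk : k ≠ 0) : ballot k 0 = 1 := by
  simp [ballot, hk]

theorem ballot_succ_succ (k d : ℕ) :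
    ballot (k + 1) (d + 1) = ballot k (d + 1) + ballot (k + 2) d := by
  have hratio := Nat.choose_succ_right_eq (k + 2 * d + 1) d
  rw [show k + 2 * d + 1 - d = k + d + 1 by omega] at hratio
  have hratio' : ((k + 2 * d + 1).choose (d + 1) : ℚ) * (d + 1) =
      (k + 2 * d + 1).choose d * (k + d + 1) := by
    exact_mod_cast hratio
  simp only [ballot, show k + 1 + 2 * (d + 1) - 1 = k + 2 * d + 1 + 1 by omega,
    show k + 2 * (d + 1) - 1 = k + 2 * d + 1 by omega,
    show k + 2 + 2 * d - 1 = k + 2 * d + 1 by omega, Nat.choose_succ_succ' (k + 2 * d + 1) d]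
  push_cast
  field_simp
  linear_combination (k + d + 2 : ℚ) * hratio'

section QuadraticSeries

variable {K : Type*} [Field K] {T : K⟦X⟧}

theorem coeff_pow_succ_of_eq_X_add (hT : T = X + C 2⁻¹ * T ^ 2) (k n : ℕ) :
    coeff (n + 1) (T ^ (k + 1)) = coeff n (T ^ k) + 2⁻¹ * coeff (n + 1) (T ^ (k + 2)) := by
  have hpow : T ^ (k + 1) = X * T ^ k + C 2⁻¹ * T ^ (k + 2) := by
    linear_combination T ^ k * hT
  rw [hpow, map_add, coeff_succ_X_mul, coeff_C_mul]

theorem coeff_pow_self_of_eq_X_add (h0 : constantCoeff T = 0) (hT : T = X + C 2⁻¹ * T ^ 2)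
    (k : ℕ) : coeff k (T ^ k) = 1 := by
  induction k with
  | zero => simp
  | succ k ih =>
    have hvanish : coeff (k + 1) (T ^ (k + 2)) = 0 :=
      X_pow_dvd_iff.mp (pow_dvd_pow_of_dvd (X_dvd_iff.mpr h0) _) _ (by omega)
    rw [coeff_pow_succ_of_eq_X_add hT, ih, hvanish, mul_zero, add_zero]

theorem coeff_pow_of_eq_X_add [CharZero K] (h0 : constantCoeff T = 0)
    (hT : T = X + C 2⁻¹ * T ^ 2) {k : ℕ} (hk : k ≠ 0) (d : ℕ) :
    coeff (k + d) (T ^ k) = 2⁻¹ ^ d * ballot k d := by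
  obtain ⟨k, rfl⟩ := Nat.exists_eq_succ_of_ne_zero hk
  induction d generalizing k with
  | zero => simp [coeff_pow_self_of_eq_X_add h0 hT, ballot_zero_right]
  | succ d ihd =>
    induction k with
    | zero =>
      rw [ballot_succ_succ, ballot_zero_left, zero_add,
        show 0 + 1 + (d + 1) = d + 1 + 1 by omega, coeff_pow_succ_of_eq_X_add hT,
        show d + 1 + 1 = 1 + 1 + d by omega, ihd 1 (by omega)]
      rw [pow_zero, coeff_one, if_neg d.succ_ne_zero]
      ring
    | succ k ihk =>
      rw [ballot_succ_succ, show k + 1 + 1 + (d + 1) = k + 1 + (d + 1) + 1 by omega,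
        coeff_pow_succ_of_eq_X_add hT, ihk (by omega),
        show k + 1 + (d + 1) + 1 = k + 2 + 1 + d by omega, ihd (k + 2) (by omega)]
      push_cast
      ring

end QuadraticSeries

theorem contDiffAt_one_sub_sqrt_one_sub_two_mul :
    ContDiffAt ℝ ∞ (fun z : ℝ => 1 - √(1 - 2 * z)) 0 :=
  contDiffAt_const.sub ((contDiffAt_const.sub (contDiffAt_const.mul contDiffAt_id)).sqrt (by simp))

theorem one_sub_sqrt_one_sub_two_mul_eventuallyEq :
    (fun z : ℝ => 1 - √(1 - 2 * z)) =ᶠ[𝓝 0] fun z => z + (1 - √(1 - 2 * z)) ^ 2 / 2 := by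
  filter_upwards [Iio_mem_nhds (show (0 : ℝ) < 1 / 2 by norm_num)] with z hz
  have hsq : √(1 - 2 * z) ^ 2 = 1 - 2 * z := Real.sq_sqrt (by linarith [Set.mem_Iio.mp hz])
  linear_combination -hsq / 2

/-- For `1 ≤ k ≤ n`, the `n`-th Maclaurin coefficient of `T(z)^k` with `T(z) = 1 - √(1-2z)`
equals `(k/n) · 2^{k-n} · C(2n-k-1, n-k)`. -/
theorem stmt_4 (k n : ℕ) (hk : 1 ≤ k) (hn : k ≤ n) :
    iteratedDeriv n (fun z : ℝ => (1 - Real.sqrt (1 - 2 * z)) ^ k) 0 / Nat.factorial n =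
      (k : ℝ) / n * (2 : ℝ) ^ ((k : ℤ) - (n : ℤ)) *
        (Nat.choose (2 * n - k - 1) (n - k) : ℝ) := by
  obtain ⟨d, rfl⟩ := Nat.exists_eq_add_of_le hn
  have hu := contDiffAt_one_sub_sqrt_one_sub_two_mul
  set T := formalTaylorSeries (fun z : ℝ => 1 - √(1 - 2 * z)) 0
  have h0 : constantCoeff T = 0 := by simp [T, constantCoeff_formalTaylorSeries]
  have hT : T = X + C 2⁻¹ * T ^ 2 := by
    rw [← formalTaylorSeries_id_zero, ← formalTaylorSeries_pow hu, ← formalTaylorSeries_div_const,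
      ← formalTaylorSeries_add (f := fun z => z) contDiffAt_id ((hu.pow 2).div_const 2)]
    exact one_sub_sqrt_one_sub_two_mul_eventuallyEq.formalTaylorSeries_eq
  rw [← coeff_formalTaylorSeries, formalTaylorSeries_pow hu,
    coeff_pow_of_eq_X_add h0 hT (by omega), show 2 * (k + d) - k - 1 = k + 2 * d - 1 by omega,
    Nat.add_sub_cancel_left, show (k : ℤ) - (k + d : ℕ) = -d by push_cast; ring, zpow_neg,
    zpow_natCast, inv_pow]
  push_cast [ballot]
  ring
end

section
/- For every integer k ≥ 1, the series Σ_{j≥0} (2j+k-1)!/(j!(j+k)!) · 4^{-j} converges and equals 2^k/k. -/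
/-!
With `k = K + 1`, the tail `∑_{j ≥ n}` of the series is
`T n = 2 S n / (k 4^n)`, where `S n = ∑_{i ≤ K} C(2n+K, n+i)` is the sum of the `k` central
entries of row `2n+K` of Pascal's triangle. Applying Pascal's rule twice and using the symmetry
of the rows around this window gives `S (n+1) = 4 S n + 2 C(2n+K+1, n) - 4 C(2n+K, n)`, which
says exactly that `T n - T (n+1)` is the `n`-th term. Since `S 0 = 2^K`, the sum is
`T 0 = 2^k / k`, provided `T n → 0`; this holds because every entry of row `2n+K` is at most
`2^K C(2n, n)` and `C(2n, n)² (2n+1) ≤ 16^n`.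
-/

open Finset Filter Topology Nat

theorem Finset.sum_range_succ_add_apply_zero {M : Type*} [AddCommMonoid M] (f : ℕ → M)
    (k : ℕ) :
    ∑ i ∈ range k, f (i + 1) + f 0 = ∑ i ∈ range k, f i + f k :=
  (sum_range_succ' f k).symm.trans (sum_range_succ f k)

namespace Nat

theorem sum_range_choose_succ_add_succ (M a k : ℕ) :
    ∑ i ∈ range k, (M + 1).choose (a + (i + 1)) =
      ∑ i ∈ range k, M.choose (a + i) + ∑ i ∈ range k, M.choose (a + (i + 1)) := by
  simp only [← add_assoc, choose_succ_succ', sum_add_distrib]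

theorem choose_le_two_pow_mul_centralBinom (n K m : ℕ) :
    (2 * n + K).choose m ≤ 2 ^ K * centralBinom n := by
  induction K generalizing m with
  | zero => simpa using choose_le_centralBinom m n
  | succ K ih =>
    cases m with
    | zero =>
      simpa using one_le_iff_ne_zero.2 (mul_ne_zero (by positivity) (centralBinom_ne_zero n))
    | succ m =>
      rw [← add_assoc, choose_succ_succ', pow_succ]
      linarith [ih m, ih (m + 1)]

theorem centralBinom_sq_mul_le (n : ℕ) : centralBinom n ^ 2 * (2 * n + 1) ≤ 16 ^ n := by
  induction n with
  | zero => simp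
  | succ n ih =>
    refine le_of_mul_le_mul_left (a := (n + 1) ^ 2) ?_ (by positivity)
    calc (n + 1) ^ 2 * (centralBinom (n + 1) ^ 2 * (2 * (n + 1) + 1))
        = 4 * ((2 * n + 1) * (2 * n + 3)) * (centralBinom n ^ 2 * (2 * n + 1)) := by
          rw [← mul_assoc, ← mul_pow, succ_mul_centralBinom_succ]; ring
      _ ≤ 4 * ((2 * n + 1) * (2 * n + 3)) * 16 ^ n := by gcongr
      _ ≤ (n + 1) ^ 2 * 16 ^ (n + 1) := by
          rw [pow_succ 16 n]; nlinarith [Nat.zero_le (16 ^ n)]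

end Nat

theorem tendsto_centralBinom_div_four_pow :
    Tendsto (fun n : ℕ ↦ (n.centralBinom : ℝ) / 4 ^ n) atTop (𝓝 0) := by
  have hsq : Tendsto (fun n : ℕ ↦ ((n.centralBinom : ℝ) / 4 ^ n) ^ 2) atTop (𝓝 0) := by
    refine squeeze_zero (fun n ↦ by positivity) (fun n ↦ ?_)
      tendsto_one_div_add_atTop_nhds_zero_nat
    have h : (n.centralBinom : ℝ) ^ 2 * (2 * n + 1) ≤ 16 ^ n := by
      exact_mod_cast n.centralBinom_sq_mul_le
    rw [div_pow, ← pow_mul, pow_mul', div_le_div_iff₀ (by positivity) (by positivity), one_mul]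
    norm_num only
    calc (n.centralBinom : ℝ) ^ 2 * (n + 1) ≤ n.centralBinom ^ 2 * (2 * n + 1) := by
          gcongr; linarith [n.cast_nonneg (α := ℝ)]
      _ ≤ 16 ^ n := h
  convert hsq.sqrt using 1
  · funext n
    rw [Real.sqrt_sq (by positivity)]
  · simp

def centralChooseSum (K n : ℕ) : ℕ := ∑ i ∈ range (K + 1), (2 * n + K).choose (n + i)

theorem centralChooseSum_zero (K : ℕ) : centralChooseSum K 0 = 2 ^ K := by
  simp [centralChooseSum, sum_range_choose]

theorem centralChooseSum_succ (K n : ℕ) :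
    centralChooseSum K (n + 1) + 4 * (2 * n + K).choose n =
      4 * centralChooseSum K n + 2 * (2 * n + K + 1).choose n := by
  set M := 2 * n + K
  have hS : centralChooseSum K n = ∑ i ∈ range (K + 1), M.choose (n + i) := rfl
  have hpascal₂ : centralChooseSum K (n + 1) =
      ∑ i ∈ range (K + 1), (M + 1).choose (n + i) +
        ∑ i ∈ range (K + 1), (M + 1).choose (n + (i + 1)) := by
    rw [centralChooseSum, ← sum_range_choose_succ_add_succ,
      show 2 * (n + 1) + K = M + 1 + 1 by omega]
    simp only [add_assoc, add_comm 1]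
  have hpascal₁ := sum_range_choose_succ_add_succ M n (K + 1)
  have hshift₁ := sum_range_succ_add_apply_zero (fun i ↦ (M + 1).choose (n + i)) (K + 1)
  have hshift := sum_range_succ_add_apply_zero (fun i ↦ M.choose (n + i)) (K + 1)
  have hsymm₁ : (M + 1).choose (n + (K + 1)) = (M + 1).choose n :=
    choose_symm_of_eq_add (by omega)
  have hsymm : M.choose (n + K) = M.choose n := choose_symm_of_eq_add (by omega)
  have hedge : (M + 1).choose (n + (K + 1)) = M.choose (n + K) + M.choose (n + (K + 1)) :=
    choose_succ_succ' _ _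
  simp only [add_zero] at hshift₁ hshift
  omega

theorem centralChooseSum_le (K n : ℕ) :
    centralChooseSum K n ≤ (K + 1) * (2 ^ K * n.centralBinom) := by
  simpa [centralChooseSum] using sum_le_card_nsmul (range (K + 1)) _ _
    fun i _ ↦ choose_le_two_pow_mul_centralBinom n K (n + i)

noncomputable def seriesTail (K n : ℕ) : ℝ := 2 * centralChooseSum K n / ((K + 1) * 4 ^ n)

theorem seriesTail_zero (K : ℕ) : seriesTail K 0 = 2 ^ (K + 1) / (K + 1) := by
  simp [seriesTail, centralChooseSum_zero, pow_succ, mul_comm]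

theorem seriesTail_sub_succ (K n : ℕ) :
    seriesTail K n - seriesTail K (n + 1) =
      (2 * n + K).choose n / ((n + K + 1) * 4 ^ n) := by
  have hstep : (centralChooseSum K (n + 1) : ℝ) + 4 * (2 * n + K).choose n =
      4 * centralChooseSum K n + 2 * (2 * n + K + 1).choose n := by
    exact_mod_cast centralChooseSum_succ K n
  have hrow : ((2 * n + K).choose n : ℝ) * (2 * n + K + 1) =
      (2 * n + K + 1).choose n * (n + K + 1) := by
    have h := choose_mul_succ_eq (2 * n + K) n
    rw [show 2 * n + K + 1 - n = n + K + 1 by omega] at h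
    exact_mod_cast h
  simp only [seriesTail, pow_succ]
  field_simp
  linear_combination (-2 * (n + K + 1) : ℝ) * hstep + 4 * hrow

theorem seriesTail_antitone (K : ℕ) : Antitone (seriesTail K) :=
  antitone_nat_of_succ_le fun n ↦ sub_nonneg.1 (by rw [seriesTail_sub_succ]; positivity)

theorem seriesTail_le (K n : ℕ) :
    seriesTail K n ≤ 2 ^ (K + 1) * ((n.centralBinom : ℝ) / 4 ^ n) := by
  have h : (centralChooseSum K n : ℝ) ≤ (K + 1) * (2 ^ K * n.centralBinom) := by
    exact_mod_cast centralChooseSum_le K n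
  rw [seriesTail, div_le_iff₀ (by positivity)]
  calc 2 * (centralChooseSum K n : ℝ) ≤ 2 * ((K + 1) * (2 ^ K * n.centralBinom)) := by gcongr
    _ = _ := by field_simp; ring

theorem tendsto_seriesTail (K : ℕ) : Tendsto (seriesTail K) atTop (𝓝 0) :=
  squeeze_zero (fun n ↦ by unfold seriesTail; positivity) (seriesTail_le K)
    (by simpa using tendsto_centralBinom_div_four_pow.const_mul (2 ^ (K + 1) : ℝ))

theorem hasSum_sub_succ_of_antitone {T : ℕ → ℝ} (hT : Antitone T)
    (hlim : Tendsto T atTop (𝓝 0)) : HasSum (fun n ↦ T n - T (n + 1)) (T 0) := by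
  rw [hasSum_iff_tendsto_nat_of_nonneg fun n ↦ sub_nonneg.2 (hT n.le_succ)]
  simpa only [sum_range_sub', sub_zero] using tendsto_const_nhds.sub hlim

theorem factorial_div_factorial_mul_factorial_eq (K j : ℕ) :
    ((2 * j + K)! : ℝ) / (j ! * (j + K + 1)!) = (2 * j + K).choose j / (j + K + 1) := by
  rw [cast_choose ℝ (by omega : j ≤ 2 * j + K), show 2 * j + K - j = j + K by omega,
    factorial_succ]
  push_cast
  field_simp

/-- For `k ≥ 1`, `∑_{j≥0} (2j+k-1)!/(j!(j+k)!) · 4^{-j} = 2^k/k` (the series converges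
to this value). -/
theorem stmt_5 (k : ℕ) (hk : 1 ≤ k) :
    HasSum
      (fun j : ℕ =>
        (Nat.factorial (2 * j + k - 1) : ℝ) /
          (Nat.factorial j * Nat.factorial (j + k)) * (1 / 4) ^ j)
      (2 ^ k / k) := by
  obtain ⟨K, rfl⟩ : ∃ K, k = K + 1 := ⟨k - 1, by omega⟩
  have hterm (j : ℕ) : ((2 * j + (K + 1) - 1)! : ℝ) / (j ! * (j + (K + 1))!) * (1 / 4) ^ j =
      seriesTail K j - seriesTail K (j + 1) := by
    rw [seriesTail_sub_succ, show 2 * j + (K + 1) - 1 = 2 * j + K by omega, ← add_assoc,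
      factorial_div_factorial_mul_factorial_eq, div_pow, one_pow]
    field_simp
  convert hasSum_sub_succ_of_antitone (seriesTail_antitone K) (tendsto_seriesTail K) using 1
  · exact funext hterm
  · rw [seriesTail_zero]
    norm_cast
end

section
/- Fix an integer k ≥ 1 and set d_k = Σ_{j≥0} (2j+k-1)!/(j!(j+k)!) 4^{-j}. Then, as ℓ → ∞, Σ_{j=0}^{ℓ-k-1} (2ℓ-2j-2)!/((ℓ-j-k)!(ℓ-j-k-1)!) · (2j+k-1)!/(j!(j+k)!) ∼ (d_k/√π) · 4^{ℓ-1} · ℓ^{2k-3/2}. -/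
/-!
By Stirling's formula, `(2m+2k-2)! / (m! (m-1)!) ∼ 4^(m+k-1) m^(2k-3/2) / √π`, while the
weights `(2j+k-1)! / (j! (j+k)!) 4^(-j)` decay like `j^(-3/2)` and are therefore summable.
After division by `4^(ℓ-1) ℓ^(2k-3/2)`, the `j`-th term of the sum tends to `1/√π` times the
`j`-th weight and is dominated by a constant multiple of it, so dominated convergence for series
(Tannery's theorem) gives the limit.
-/

open Filter Asymptotics Real Nat Topology Finset

lemma isEquivalent_natCast_add (c : ℝ) :
    (fun n : ℕ => (n : ℝ) + c) ~[atTop] fun n => (n : ℝ) := by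
  refine (isEquivalent_of_tendsto_one ?_).symm
  simpa [Pi.div_def] using tendsto_natCast_div_add_atTop c

lemma isEquivalent_factorial_add (r : ℕ) :
    (fun n : ℕ => ((n + r)! : ℝ)) ~[atTop] fun n => (n ! : ℝ) * n ^ r := by
  induction r with
  | zero => simpa using IsEquivalent.refl
  | succ r ih =>
    have h := (isEquivalent_natCast_add (r + 1)).mul ih
    convert h using 1 <;> ext n
    · simp [← add_assoc, factorial_succ]
    · simp [pow_succ]; ring

lemma isEquivalent_factorial_two_mul_div_sq :
    (fun n : ℕ => ((2 * n)! : ℝ) / (n ! : ℝ) ^ 2) ~[atTop] fun n => 4 ^ n / √(π * n) := by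
  have h2 : Tendsto (fun n : ℕ => 2 * n) atTop atTop := tendsto_id.const_mul_atTop' two_pos
  refine ((Stirling.factorial_isEquivalent_stirling.comp_tendsto h2).div
    (Stirling.factorial_isEquivalent_stirling.pow 2)).congr_right ?_
  filter_upwards [eventually_ge_atTop 1] with n hn
  have hn : (0 : ℝ) < n := by exact_mod_cast hn
  have hsqrt : √(2 * (2 * n : ℕ) * π) = 2 * √(π * n) := by
    rw [show 2 * ((2 * n : ℕ) : ℝ) * π = 2 ^ 2 * (π * n) by push_cast; ring,
      sqrt_mul (by positivity), sqrt_sq zero_le_two]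
  have hsq : √(π * n) ^ 2 = π * n := sq_sqrt (by positivity)
  simp only [Function.comp_apply, Pi.div_apply, Pi.pow_apply]
  rw [hsqrt, mul_pow, sq_sqrt (by positivity), ← pow_mul, div_pow, div_pow]
  push_cast
  rw [mul_pow, mul_comm n 2, pow_mul, show (2 : ℝ) ^ 2 = 4 by norm_num]
  field_simp
  rw [hsq]

lemma isEquivalent_factorial_two_mul_add_div_sq (r : ℕ) :
    (fun n : ℕ => ((2 * n + r)! : ℝ) / (n ! : ℝ) ^ 2) ~[atTop]
      fun n => 2 ^ r / √π * 4 ^ n * (n : ℝ) ^ ((r : ℝ) - 1 / 2) := by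
  have h2 : Tendsto (fun n : ℕ => 2 * n) atTop atTop := tendsto_id.const_mul_atTop' two_pos
  have hshift := ((isEquivalent_factorial_add r).comp_tendsto h2).div
    (IsEquivalent.refl (u := fun n : ℕ => (n ! : ℝ) ^ 2))
  have hmain := isEquivalent_factorial_two_mul_div_sq.mul
    (IsEquivalent.refl (u := fun n : ℕ => ((2 * n : ℕ) : ℝ) ^ r))
  refine (hshift.trans (hmain.congr_left ?_)).congr_right ?_
  · refine Eventually.of_forall fun n => ?_
    simp only [Function.comp_apply, Pi.div_apply, Pi.mul_apply]
    ring
  · filter_upwards [eventually_ge_atTop 1] with n hn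
    have hn : (0 : ℝ) < n := by exact_mod_cast hn
    simp only [Pi.mul_apply]
    rw [rpow_sub hn, rpow_natCast, ← sqrt_eq_rpow, sqrt_mul pi_nonneg]
    push_cast
    field_simp
    ring

lemma tendsto_natCast_rpow_div_rpow_add (α : ℝ) (c : ℕ) :
    Tendsto (fun n : ℕ => (n : ℝ) ^ α / ((n + c : ℕ) : ℝ) ^ α) atTop (𝓝 1) := by
  have h := (tendsto_natCast_div_add_atTop (c : ℝ)).rpow_const (p := α) (Or.inl one_ne_zero)
  rw [one_rpow] at h
  refine h.congr fun n => ?_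
  rw [div_rpow (by positivity) (by positivity)]
  push_cast
  rfl

lemma natCast_sub_rpow_div_rpow_le_one {α : ℝ} (hα : 0 ≤ α) (n j : ℕ) :
    ((n - j : ℕ) : ℝ) ^ α / (n : ℝ) ^ α ≤ 1 := by
  rcases Nat.eq_zero_or_pos n with rfl | hn
  · simpa using div_self_le_one ((0 : ℝ) ^ α)
  exact div_le_one_of_le₀ (rpow_le_rpow (by positivity) (by exact_mod_cast Nat.sub_le n j) hα)
    (by positivity)

theorem tendsto_sum_range_mul_sub_div_pow_mul_rpow {ρ α L : ℝ} (hρ : ρ ≠ 0) (hα : 0 ≤ α)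
    {a u : ℕ → ℝ} (ha : Tendsto (fun n => a n / (ρ ^ n * (n : ℝ) ^ α)) atTop (𝓝 L))
    (hu : Summable fun j => u j / ρ ^ j) :
    Tendsto (fun n => (∑ j ∈ range n, u j * a (n - j)) / (ρ ^ n * (n : ℝ) ^ α)) atTop
      (𝓝 (L * ∑' j, u j / ρ ^ j)) := by
  set g := fun n => a n / (ρ ^ n * (n : ℝ) ^ α) with hg
  obtain ⟨C, hC⟩ := ha.norm.bddAbove_range
  have hgC (m : ℕ) : ‖g m‖ ≤ C := hC ⟨m, rfl⟩
  have hC0 : 0 ≤ C := (norm_nonneg _).trans (hgC 0)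
  -- the `j`-th normalized term, split into factors that converge (as `n → ∞`) and are bounded
  let f n j : ℝ :=
    if j < n then u j / ρ ^ j * g (n - j) * (((n - j : ℕ) : ℝ) ^ α / (n : ℝ) ^ α) else 0
  have hsum (n : ℕ) :
      ∑' j, f n j = (∑ j ∈ range n, u j * a (n - j)) / (ρ ^ n * (n : ℝ) ^ α) := by
    rw [tsum_eq_sum (s := range n) fun j hj => if_neg (by simpa using hj), sum_div]
    refine sum_congr rfl fun j hj => ?_
    have hj : j < n := mem_range.1 hj
    have hpos : (0 : ℝ) < ((n - j : ℕ) : ℝ) := by exact_mod_cast Nat.sub_pos_of_lt hj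
    have hρn : ρ ^ n = ρ ^ j * ρ ^ (n - j) := by rw [← pow_add, Nat.add_sub_cancel' hj.le]
    simp only [if_pos hj, hg, hρn]
    field_simp
  have hlim (j : ℕ) : Tendsto (f · j) atTop (𝓝 (u j / ρ ^ j * L)) := by
    rw [← tendsto_add_atTop_iff_nat j]
    have h := (tendsto_const_nhds (x := u j / ρ ^ j)).mul
      (ha.mul (tendsto_natCast_rpow_div_rpow_add α j))
    rw [mul_one] at h
    refine h.congr' ?_
    filter_upwards [eventually_ge_atTop 1] with n hn
    simp only [f, if_pos (by omega : j < n + j), Nat.add_sub_cancel, hg, mul_assoc]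
  have hbound (n j : ℕ) : ‖f n j‖ ≤ ‖u j / ρ ^ j‖ * C := by
    by_cases hj : j < n
    · simp only [f, if_pos hj, norm_mul, norm_of_nonneg (by positivity :
        (0 : ℝ) ≤ ((n - j : ℕ) : ℝ) ^ α / (n : ℝ) ^ α)]
      calc ‖u j / ρ ^ j‖ * ‖g (n - j)‖ * (((n - j : ℕ) : ℝ) ^ α / (n : ℝ) ^ α)
          ≤ ‖u j / ρ ^ j‖ * C * 1 := by
            gcongr
            exacts [hgC _, natCast_sub_rpow_div_rpow_le_one hα n j]
        _ = ‖u j / ρ ^ j‖ * C := mul_one _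
    · simp only [f, if_neg hj, norm_zero]
      positivity
  have h := tendsto_tsum_of_dominated_convergence (hu.norm.mul_right C) hlim
    (Eventually.of_forall hbound)
  rw [tsum_mul_right, mul_comm] at h
  exact h.congr hsum

lemma summable_factorial_div_factorial_mul_factorial_add (k : ℕ) (hk : 1 ≤ k) :
    Summable fun j : ℕ => ((2 * j + k - 1)! : ℝ) / (j ! * (j + k)!) * (1 / 4) ^ j := by
  have h := ((isEquivalent_factorial_two_mul_add_div_sq (k - 1)).mul
    (isEquivalent_factorial_add k).inv).mul
    (IsEquivalent.refl (u := fun j : ℕ => (j ! : ℝ) * (1 / 4) ^ j))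
  have hp : Summable fun j : ℕ => 2 ^ (k - 1) / √π * (j : ℝ) ^ (-3 / 2 : ℝ) :=
    (summable_nat_rpow.2 (by norm_num)).mul_left _
  refine summable_of_isBigO_nat hp ((h.congr_left ?_).congr_right ?_).isBigO
  · refine Eventually.of_forall fun j => ?_
    simp only [Pi.mul_apply, Pi.inv_apply, Nat.add_sub_assoc hk]
    field_simp
  · filter_upwards [eventually_ge_atTop 1] with j hj
    have hj : (0 : ℝ) < j := by exact_mod_cast hj
    simp only [Pi.mul_apply, Pi.inv_apply]
    rw [show (-3 / 2 : ℝ) = ((k - 1 : ℕ) : ℝ) - 1 / 2 - k by push_cast [hk]; ring,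
      rpow_sub hj _ (k : ℝ), rpow_natCast, one_div_pow]
    field_simp

lemma tendsto_factorial_div_factorial_mul_factorial_pred (k : ℕ) (hk : 1 ≤ k) :
    Tendsto (fun m : ℕ => ((2 * m + 2 * k - 2)! : ℝ) / (m ! * (m - 1)!) /
      (4 ^ m * (m : ℝ) ^ (2 * (k : ℝ) - 3 / 2))) atTop (𝓝 (2 ^ (2 * k - 2) / √π)) := by
  have h := (isEquivalent_factorial_two_mul_add_div_sq (2 * k - 2)).mul
    (IsEquivalent.refl
      (u := fun m : ℕ => (m : ℝ) / (4 ^ m * (m : ℝ) ^ (2 * (k : ℝ) - 3 / 2))))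
  refine (h.congr_left ?_).symm.tendsto_nhds (tendsto_const_nhds.congr' ?_)
  · filter_upwards [eventually_ge_atTop 1] with m hm
    have hfac : (m ! : ℝ) = m * (m - 1)! := by
      rw [← Nat.mul_factorial_pred (by omega : m ≠ 0)]; push_cast; ring
    simp only [Pi.mul_apply, Nat.add_sub_assoc (by omega : 2 ≤ 2 * k), hfac]
    have hm : (0 : ℝ) < m := by exact_mod_cast hm
    field_simp
  · filter_upwards [eventually_ge_atTop 1] with m hm
    have hm : (0 : ℝ) < m := by exact_mod_cast hm
    simp only [Pi.mul_apply]
    rw [show 2 * (k : ℝ) - 3 / 2 = ((2 * k - 2 : ℕ) : ℝ) - 1 / 2 + 1 by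
      push_cast [Nat.cast_sub (by omega : 2 ≤ 2 * k)]; ring, rpow_add_one hm.ne']
    field_simp

lemma tendsto_sum_range_factorial_convolution (k : ℕ) (hk : 1 ≤ k) :
    Tendsto (fun n : ℕ => (∑ j ∈ range n, ((2 * j + k - 1)! : ℝ) / (j ! * (j + k)!) *
        (((2 * (n - j) + 2 * k - 2)! : ℝ) / ((n - j)! * (n - j - 1)!))) /
          (4 ^ n * (n : ℝ) ^ (2 * (k : ℝ) - 3 / 2))) atTop
      (𝓝 (2 ^ (2 * k - 2) / √π *
        ∑' j : ℕ, ((2 * j + k - 1)! : ℝ) / (j ! * (j + k)!) * (1 / 4) ^ j)) := by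
  have hterm (j : ℕ) : ((2 * j + k - 1)! : ℝ) / (j ! * (j + k)!) * (1 / 4) ^ j =
      ((2 * j + k - 1)! : ℝ) / (j ! * (j + k)!) / 4 ^ j := by
    rw [one_div_pow, mul_one_div]
  have hα : (0 : ℝ) ≤ 2 * k - 3 / 2 := by linarith [(by exact_mod_cast hk : (1 : ℝ) ≤ k)]
  have h := tendsto_sum_range_mul_sub_div_pow_mul_rpow four_ne_zero hα
    (tendsto_factorial_div_factorial_mul_factorial_pred k hk)
    ((summable_factorial_div_factorial_mul_factorial_add k hk).congr hterm)
  rwa [← tsum_congr hterm] at h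

/-- Laplace-method asymptotics: with `d_k = ∑_{j≥0} (2j+k-1)!/(j!(j+k)!) 4^{-j}`, as `ℓ → ∞`,
`∑_{j=0}^{ℓ-k-1} (2ℓ-2j-2)!/((ℓ-j-k)!(ℓ-j-k-1)!) · (2j+k-1)!/(j!(j+k)!)
  ∼ (d_k/√π) · 4^{ℓ-1} · ℓ^{2k-3/2}`. -/
theorem stmt_10 (k : ℕ) (hk : 1 ≤ k) :
    Tendsto
      (fun ℓ : ℕ =>
        (∑ j ∈ Finset.range (ℓ - k),
            (Nat.factorial (2 * ℓ - 2 * j - 2) : ℝ) /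
                ((Nat.factorial (ℓ - j - k) : ℝ) * Nat.factorial (ℓ - j - k - 1)) *
              ((Nat.factorial (2 * j + k - 1) : ℝ) /
                (Nat.factorial j * Nat.factorial (j + k)))) /
          ((∑' j : ℕ, (Nat.factorial (2 * j + k - 1) : ℝ) /
              (Nat.factorial j * Nat.factorial (j + k)) * (1 / 4) ^ j) / Real.sqrt Real.pi *
            4 ^ (ℓ - 1) * (ℓ : ℝ) ^ (2 * (k : ℝ) - 3 / 2)))
      atTop (nhds 1) := by
  have hconv := tendsto_sum_range_factorial_convolution k hk
  set D := ∑' j : ℕ, ((2 * j + k - 1)! : ℝ) / (j ! * (j + k)!) * (1 / 4) ^ j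
  have hD : 0 < D := (summable_factorial_div_factorial_mul_factorial_add k hk).tsum_pos
    (fun j => by positivity) 0 (by positivity)
  have h := (hconv.div_const (2 ^ (2 * k - 2) / √π * D)).mul
    (tendsto_natCast_rpow_div_rpow_add (2 * k - 3 / 2) k)
  rw [div_self (by positivity), one_mul] at h
  rw [← tendsto_add_atTop_iff_nat k]
  refine h.congr' ?_
  filter_upwards [eventually_ge_atTop 1] with n hn
  have hn : (0 : ℝ) < n := by exact_mod_cast hn
  have hsum : ∑ j ∈ range n, ((2 * j + k - 1)! : ℝ) / (j ! * (j + k)!) *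
      (((2 * (n - j) + 2 * k - 2)! : ℝ) / ((n - j)! * (n - j - 1)!)) =
      ∑ j ∈ range (n + k - k), ((2 * (n + k) - 2 * j - 2)! : ℝ) /
        ((n + k - j - k)! * (n + k - j - k - 1)!) *
          (((2 * j + k - 1)! : ℝ) / (j ! * (j + k)!)) := by
    refine sum_congr (by rw [Nat.add_sub_cancel]) fun j hj => ?_
    have hj := mem_range.1 hj
    rw [mul_comm, show 2 * (n + k) - 2 * j - 2 = 2 * (n - j) + 2 * k - 2 by omega,
      show n + k - j - k = n - j by omega]
  have h4 : (4 : ℝ) ^ (n + k - 1) = 4 ^ n * 2 ^ (2 * k - 2) := by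
    rw [show n + k - 1 = n + (k - 1) by omega, pow_add, show 2 * k - 2 = 2 * (k - 1) by omega,
      pow_mul]
    norm_num
  rw [hsum, h4]
  field_simp
end

section
/- Let t ≥ 0 and let α_0,…,α_t be real numbers, none equal to −1. Let s = #{0 ≤ j ≤ t : α_j > −1}. Then Σ_{ℓ_0+⋯+ℓ_t = ℓ} ℓ_0^{α_0} ⋯ ℓ_t^{α_t} = O(ℓ^{s−1+Σ_{α_j>−1} α_j}) as ℓ → ∞, where the sum runs over all tuples of positive integers (ℓ_0,…,ℓ_t) summing to ℓ. -/
/-!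
Induct on the number of parts, splitting off the first part `m`: the sum for `α` is the
convolution `∑_{0<m<ℓ} m^{α₀} S(ℓ - m)` of `m^{α₀}` with the sum `S` for the remaining exponents.
For `a, b ≠ -1` one has `∑_{0<m<ℓ} m^a (ℓ-m)^b = O(ℓ^{max(a, b, a+b+1)})`, because in each term
one of `m`, `ℓ - m` is at least `ℓ/2`, while `∑_{m ≤ n} m^a` is `O(n^{a+1})` for `a > -1` and
`O(1)` for `a < -1`. The exponent of the theorem obeys exactly the recursion
`e(α) = max(α₀, e', α₀ + e' + 1)`, with `e'` the exponent of the remaining parts, and it is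
never `-1`.
-/

open Finset Filter Asymptotics

lemma mul_rpow_sub_one_le_rpow_sub_rpow {p x : ℝ} (hp₀ : 0 ≤ p) (hp₁ : p ≤ 1) (hx : 1 ≤ x) :
    p * x ^ (p - 1) ≤ x ^ p - (x - 1) ^ p := by
  have hx₀ : 0 < x := by linarith
  have bernoulli := rpow_one_add_le_one_add_mul_self (s := -x⁻¹)
    (by linarith [inv_le_one_of_one_le₀ hx]) hp₀ hp₁
  rw [show 1 + -x⁻¹ = (x - 1) / x by field_simp; ring, Real.div_rpow (by linarith) hx₀.le,
    div_le_iff₀ (by positivity)] at bernoulli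
  rw [Real.rpow_sub_one hx₀.ne']
  have : (1 + p * -x⁻¹) * x ^ p = x ^ p - p * (x ^ p / x) := by field_simp; ring
  linarith

lemma sum_Icc_rpow_le_of_nonneg {a : ℝ} (ha : 0 ≤ a) (n : ℕ) :
    ∑ m ∈ Icc 1 n, (m : ℝ) ^ a ≤ (n : ℝ) ^ (a + 1) := by
  calc ∑ m ∈ Icc 1 n, (m : ℝ) ^ a ≤ ∑ _m ∈ Icc 1 n, (n : ℝ) ^ a := by
        gcongr with m hm
        exact_mod_cast (mem_Icc.mp hm).2
    _ = (n : ℝ) ^ (a + 1) := by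
        rw [sum_const, Nat.card_Icc, add_tsub_cancel_right, nsmul_eq_mul,
          Real.rpow_add_one' (Nat.cast_nonneg n) (by linarith), mul_comm]

lemma sum_Icc_rpow_le_of_neg_one_lt {a : ℝ} (ha₁ : -1 < a) (ha₀ : a ≤ 0) (n : ℕ) :
    ∑ m ∈ Icc 1 n, (m : ℝ) ^ a ≤ (n : ℝ) ^ (a + 1) / (a + 1) := by
  have hp : 0 < a + 1 := by linarith
  induction n with
  | zero => simp [Real.zero_rpow hp.ne']
  | succ n ih =>
    have step := mul_rpow_sub_one_le_rpow_sub_rpow (p := a + 1) (x := n + 1) hp.le (by linarith)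
      (by linarith [(Nat.cast_nonneg n : (0 : ℝ) ≤ n)])
    rw [add_sub_cancel_right, add_sub_cancel_right] at step
    rw [sum_Icc_succ_top (by omega), le_div_iff₀ hp, add_mul]
    rw [le_div_iff₀ hp] at ih
    push_cast
    linarith

lemma exists_sum_Ico_rpow_le {a : ℝ} (ha : a ≠ -1) :
    ∃ C, 0 ≤ C ∧ ∀ n : ℕ, ∑ m ∈ Ico 1 n, (m : ℝ) ^ a ≤ C * (n : ℝ) ^ max (a + 1) 0 := by
  suffices ∃ C, 0 ≤ C ∧ ∀ n : ℕ, ∑ m ∈ Icc 1 n, (m : ℝ) ^ a ≤ C * (n : ℝ) ^ max (a + 1) 0 by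
    obtain ⟨C, hC, h⟩ := this
    exact ⟨C, hC, fun n => (sum_le_sum_of_subset_of_nonneg Ico_subset_Icc_self
      fun m _ _ => by positivity).trans (h n)⟩
  rcases lt_or_gt_of_ne ha with ha | ha
  · refine ⟨∑' m : ℕ, (m : ℝ) ^ a, tsum_nonneg fun m => by positivity, fun n => ?_⟩
    rw [max_eq_right (by linarith), Real.rpow_zero, mul_one]
    exact (Real.summable_nat_rpow.mpr ha).sum_le_tsum _ fun m _ => by positivity
  rw [max_eq_left (by linarith)]
  rcases le_total a 0 with ha₀ | ha₀
  · exact ⟨(a + 1)⁻¹, inv_nonneg.mpr (by linarith), fun n => by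
      rw [inv_mul_eq_div]; exact sum_Icc_rpow_le_of_neg_one_lt ha ha₀ n⟩
  · exact ⟨1, zero_le_one, fun n => by rw [one_mul]; exact sum_Icc_rpow_le_of_nonneg ha₀ n⟩

lemma rpow_le_two_rpow_abs_mul (b : ℝ) {x y : ℝ} (hx : 0 < x) (hxy : y ≤ 2 * x) (hyx : x ≤ y) :
    x ^ b ≤ 2 ^ |b| * y ^ b := by
  have hy : 0 < y := by linarith
  rcases le_total 0 b with hb | hb
  · calc x ^ b ≤ y ^ b := by gcongr
      _ ≤ 2 ^ |b| * y ^ b := le_mul_of_one_le_left (by positivity)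
          (Real.one_le_rpow (by norm_num) (abs_nonneg b))
  · calc x ^ b ≤ (y / 2) ^ b := Real.rpow_le_rpow_of_nonpos (by positivity) (by linarith) hb
      _ = 2 ^ |b| * y ^ b := by
          rw [Real.div_rpow hy.le (by norm_num), abs_of_nonpos hb, Real.rpow_neg (by norm_num)]
          ring

def convExponent (a b : ℝ) : ℝ := max a (max b (a + b + 1))

lemma convExponent_comm (a b : ℝ) : convExponent a b = convExponent b a := by
  simp only [convExponent, add_comm a b]
  rw [max_left_comm]

lemma add_max_le_convExponent (a b : ℝ) : b + max (a + 1) 0 ≤ convExponent a b := by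
  rw [add_max, add_zero, convExponent]
  exact max_le (le_max_of_le_right (le_max_of_le_right (by linarith)))
    (le_max_of_le_right (le_max_left _ _))

lemma rpow_mul_rpow_sub_le_add (a b : ℝ) {ℓ m : ℕ} (hm : m ∈ Ico 1 ℓ) :
    (m : ℝ) ^ a * ((ℓ - m : ℕ) : ℝ) ^ b ≤
      2 ^ |b| * (ℓ : ℝ) ^ b * (m : ℝ) ^ a + 2 ^ |a| * (ℓ : ℝ) ^ a * ((ℓ - m : ℕ) : ℝ) ^ b := by
  obtain ⟨hm₁, hmℓ⟩ := mem_Ico.mp hm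
  have hm₀ : (0 : ℝ) < m := by exact_mod_cast hm₁
  have hℓm₀ : (0 : ℝ) < (ℓ - m : ℕ) := by exact_mod_cast Nat.sub_pos_of_lt hmℓ
  have hsum : ((ℓ - m : ℕ) : ℝ) + m = ℓ := by rw [Nat.cast_sub hmℓ.le]; ring
  rcases le_total (2 * m) ℓ with h | h
  · have h' : (2 * m : ℝ) ≤ ℓ := by exact_mod_cast h
    have hfac := rpow_le_two_rpow_abs_mul b hℓm₀ (y := ℓ) (by linarith) (by linarith)
    have hterm : (m : ℝ) ^ a * ((ℓ - m : ℕ) : ℝ) ^ b ≤ 2 ^ |b| * (ℓ : ℝ) ^ b * (m : ℝ) ^ a := by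
      rw [mul_comm]; gcongr
    linarith [show 0 ≤ 2 ^ |a| * (ℓ : ℝ) ^ a * ((ℓ - m : ℕ) : ℝ) ^ b by positivity]
  · have h' : (ℓ : ℝ) ≤ 2 * m := by exact_mod_cast h
    have hfac := rpow_le_two_rpow_abs_mul a hm₀ (y := ℓ) (by linarith) (by linarith)
    have hterm : (m : ℝ) ^ a * ((ℓ - m : ℕ) : ℝ) ^ b ≤
        2 ^ |a| * (ℓ : ℝ) ^ a * ((ℓ - m : ℕ) : ℝ) ^ b := by
      gcongr
    linarith [show 0 ≤ 2 ^ |b| * (ℓ : ℝ) ^ b * (m : ℝ) ^ a by positivity]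

lemma exists_sum_Ico_rpow_mul_rpow_sub_le {a b : ℝ} (ha : a ≠ -1) (hb : b ≠ -1) :
    ∃ C, 0 ≤ C ∧ ∀ ℓ : ℕ, 1 ≤ ℓ →
      ∑ m ∈ Ico 1 ℓ, (m : ℝ) ^ a * ((ℓ - m : ℕ) : ℝ) ^ b ≤ C * (ℓ : ℝ) ^ convExponent a b := by
  obtain ⟨A, hA, hSa⟩ := exists_sum_Ico_rpow_le ha
  obtain ⟨B, hB, hSb⟩ := exists_sum_Ico_rpow_le hb
  refine ⟨2 ^ |b| * A + 2 ^ |a| * B, by positivity, fun ℓ hℓ => ?_⟩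
  have hℓ₁ : (1 : ℝ) ≤ ℓ := by exact_mod_cast hℓ
  have hℓ₀ : (0 : ℝ) < ℓ := by linarith
  have reflect : ∑ m ∈ Ico 1 ℓ, ((ℓ - m : ℕ) : ℝ) ^ b = ∑ m ∈ Ico 1 ℓ, (m : ℝ) ^ b := by
    rw [sum_Ico_reflect (fun m => (m : ℝ) ^ b) 1 (Nat.le_succ ℓ), Nat.add_sub_cancel,
      Nat.add_sub_cancel_left]
  have power_le {c d : ℝ} (h : c + d ≤ convExponent a b) :
      (ℓ : ℝ) ^ c * (ℓ : ℝ) ^ d ≤ (ℓ : ℝ) ^ convExponent a b := by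
    rw [← Real.rpow_add hℓ₀]; exact Real.rpow_le_rpow_of_exponent_le hℓ₁ h
  have hab := power_le (add_max_le_convExponent a b)
  have hba := power_le ((add_max_le_convExponent b a).trans (convExponent_comm b a).le)
  calc ∑ m ∈ Ico 1 ℓ, (m : ℝ) ^ a * ((ℓ - m : ℕ) : ℝ) ^ b
      ≤ ∑ m ∈ Ico 1 ℓ, (2 ^ |b| * (ℓ : ℝ) ^ b * (m : ℝ) ^ a
          + 2 ^ |a| * (ℓ : ℝ) ^ a * ((ℓ - m : ℕ) : ℝ) ^ b) :=
        sum_le_sum fun m hm => rpow_mul_rpow_sub_le_add a b hm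
    _ = 2 ^ |b| * (ℓ : ℝ) ^ b * ∑ m ∈ Ico 1 ℓ, (m : ℝ) ^ a
          + 2 ^ |a| * (ℓ : ℝ) ^ a * ∑ m ∈ Ico 1 ℓ, (m : ℝ) ^ b := by
        rw [sum_add_distrib, ← mul_sum, ← mul_sum, reflect]
    _ ≤ 2 ^ |b| * (ℓ : ℝ) ^ b * (A * (ℓ : ℝ) ^ max (a + 1) 0)
          + 2 ^ |a| * (ℓ : ℝ) ^ a * (B * (ℓ : ℝ) ^ max (b + 1) 0) := by
        gcongr
        · exact hSa ℓ
        · exact hSb ℓ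
    _ = 2 ^ |b| * A * ((ℓ : ℝ) ^ b * (ℓ : ℝ) ^ max (a + 1) 0)
          + 2 ^ |a| * B * ((ℓ : ℝ) ^ a * (ℓ : ℝ) ^ max (b + 1) 0) := by ring
    _ ≤ (2 ^ |b| * A + 2 ^ |a| * B) * (ℓ : ℝ) ^ convExponent a b := by
        rw [add_mul]; gcongr

def compositions (k ℓ : ℕ) : Finset (Fin k → ℕ) :=
  (Fintype.piFinset fun _ => Icc 1 ℓ).filter fun f => ∑ i, f i = ℓ

noncomputable def compositionSum {k : ℕ} (α : Fin k → ℝ) (ℓ : ℕ) : ℝ :=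
  ∑ f ∈ compositions k ℓ, ∏ i, (f i : ℝ) ^ α i

lemma mem_compositions {k ℓ : ℕ} {f : Fin k → ℕ} :
    f ∈ compositions k ℓ ↔ (∀ i, 1 ≤ f i) ∧ ∑ i, f i = ℓ := by
  simp only [compositions, mem_filter, Fintype.mem_piFinset, mem_Icc]
  refine ⟨fun ⟨h, hsum⟩ => ⟨fun i => (h i).1, hsum⟩,
    fun ⟨h, hsum⟩ => ⟨fun i => ⟨h i, ?_⟩, hsum⟩⟩
  exact hsum ▸ single_le_sum (fun j _ => Nat.zero_le (f j)) (mem_univ i)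

lemma cons_mem_compositions {k ℓ m : ℕ} {g : Fin (k + 1) → ℕ} :
    Fin.cons m g ∈ compositions (k + 2) ℓ ↔ m ∈ Ico 1 ℓ ∧ g ∈ compositions (k + 1) (ℓ - m) := by
  simp only [mem_compositions, Fin.forall_fin_succ (n := k + 1), Fin.sum_univ_succ (n := k + 1),
    Fin.cons_zero, Fin.cons_succ, mem_Ico]
  have hg₀ : g 0 ≤ ∑ i, g i := single_le_sum (fun j _ => Nat.zero_le (g j)) (mem_univ 0)
  constructor
  · rintro ⟨⟨hm, hg⟩, hsum⟩
    exact ⟨⟨hm, by linarith [hg 0]⟩, hg, by omega⟩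
  · rintro ⟨hm, hg, hsum⟩
    exact ⟨⟨hm.1, hg⟩, by omega⟩

lemma sum_compositions_succ {M : Type*} [AddCommMonoid M] {k ℓ : ℕ}
    (F : (Fin (k + 2) → ℕ) → M) :
    ∑ f ∈ compositions (k + 2) ℓ, F f =
      ∑ m ∈ Ico 1 ℓ, ∑ g ∈ compositions (k + 1) (ℓ - m), F (Fin.cons m g) := by
  rw [sum_sigma']
  refine sum_nbij' (fun f => ⟨f 0, Fin.tail f⟩) (fun x => Fin.cons x.1 x.2) ?_ ?_ ?_ ?_ ?_
  · intro f hf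
    rw [← Fin.cons_self_tail f, cons_mem_compositions] at hf
    simpa using hf
  · intro x hx
    simpa [cons_mem_compositions] using hx
  · intro f _; simp
  · intro x _; simp
  · intro f _; simp

lemma compositionSum_cons {k : ℕ} (α : Fin (k + 2) → ℝ) (ℓ : ℕ) :
    compositionSum α ℓ =
      ∑ m ∈ Ico 1 ℓ, (m : ℝ) ^ α 0 * compositionSum (Fin.tail α) (ℓ - m) := by
  simp only [compositionSum, sum_compositions_succ, mul_sum, Fin.prod_univ_succ, Fin.cons_zero,
    Fin.cons_succ, Fin.tail]

lemma compositionSum_one (α : Fin 1 → ℝ) {ℓ : ℕ} (hℓ : 1 ≤ ℓ) :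
    compositionSum α ℓ = (ℓ : ℝ) ^ α 0 := by
  have : compositions 1 ℓ = {fun _ => ℓ} := by
    ext f
    simp only [mem_compositions, Fin.forall_fin_one, univ_unique, Fin.default_eq_zero,
      sum_singleton, mem_singleton, funext_iff, and_iff_right_iff_imp]
    omega
  simp [compositionSum, this]

lemma compositionSum_nonneg {k : ℕ} (α : Fin k → ℝ) (ℓ : ℕ) : 0 ≤ compositionSum α ℓ :=
  sum_nonneg fun _ _ => prod_nonneg fun _ _ => by positivity

noncomputable def compositionExponent {k : ℕ} (α : Fin (k + 1) → ℝ) : ℝ :=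
  if (univ.filter fun j => -1 < α j).Nonempty then
    ((univ.filter fun j => -1 < α j).card : ℝ) - 1 + ∑ j ∈ univ.filter (fun j => -1 < α j), α j
  else univ.sup' univ_nonempty α

section
variable {k : ℕ} {α : Fin (k + 1) → ℝ}

lemma compositionExponent_of_exists (h : ∃ j, -1 < α j) :
    compositionExponent α = ∑ j, (if -1 < α j then α j + 1 else 0) - 1 := by
  rw [compositionExponent, if_pos (by simpa [filter_nonempty_iff] using h), ← sum_filter,
    sum_add_distrib, sum_const, nsmul_one]
  ring

lemma compositionExponent_of_forall (h : ∀ j, α j ≤ -1) :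
    compositionExponent α = univ.sup' univ_nonempty α := by
  rw [compositionExponent, if_neg (by simpa [filter_nonempty_iff] using h)]

lemma neg_one_lt_compositionExponent (h : ∃ j, -1 < α j) : -1 < compositionExponent α := by
  obtain ⟨j, hj⟩ := h
  have : 0 < ∑ j, (if -1 < α j then α j + 1 else 0) :=
    sum_pos' (fun i _ => by split_ifs <;> linarith)
      ⟨j, mem_univ j, by simp only [if_pos hj]; linarith⟩
  rw [compositionExponent_of_exists ⟨j, hj⟩]
  linarith

lemma compositionExponent_lt_neg_one (hα : ∀ j, α j ≠ -1) (h : ∀ j, α j ≤ -1) :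
    compositionExponent α < -1 := by
  rw [compositionExponent_of_forall h, sup'_lt_iff]
  exact fun j _ => lt_of_le_of_ne (h j) (hα j)

lemma compositionExponent_ne_neg_one (hα : ∀ j, α j ≠ -1) : compositionExponent α ≠ -1 := by
  by_cases h : ∃ j, -1 < α j
  · exact (neg_one_lt_compositionExponent h).ne'
  · push Not at h
    exact (compositionExponent_lt_neg_one hα h).ne

end

lemma compositionExponent_one (α : Fin 1 → ℝ) : compositionExponent α = α 0 := by
  by_cases h : -1 < α 0
  · rw [compositionExponent_of_exists ⟨0, h⟩]
    simp [h]
  · rw [compositionExponent_of_forall (Fin.forall_fin_one.2 (not_lt.1 h))]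
    simp

lemma Fin.sup'_univ_succ {β : Type*} [LinearOrder β] {k : ℕ} (α : Fin (k + 2) → β) :
    univ.sup' univ_nonempty α = max (α 0) (univ.sup' univ_nonempty (Fin.tail α)) := by
  apply le_antisymm
  · exact sup'_le _ _ fun j _ => Fin.cases (le_max_left _ _)
      (fun i => le_max_of_le_right (le_sup' (Fin.tail α) (mem_univ i))) j
  · exact max_le (le_sup' α (mem_univ 0)) (sup'_le _ _ fun i _ => le_sup' α (mem_univ i.succ))

lemma compositionExponent_cons {k : ℕ} {α : Fin (k + 2) → ℝ} (hα : ∀ j, α j ≠ -1) :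
    compositionExponent α = convExponent (α 0) (compositionExponent (Fin.tail α)) := by
  have hsplit : ∑ j, (if -1 < α j then α j + 1 else 0) =
      (if -1 < α 0 then α 0 + 1 else 0) +
        ∑ j, (if -1 < Fin.tail α j then Fin.tail α j + 1 else 0) :=
    Fin.sum_univ_succ _
  rw [convExponent]
  by_cases htail : ∃ j, -1 < Fin.tail α j
  · have he := neg_one_lt_compositionExponent htail
    have hS := compositionExponent_of_exists htail
    obtain ⟨j, hj⟩ := htail
    rw [compositionExponent_of_exists ⟨j.succ, hj⟩, hsplit]
    split_ifs with ha
    · rw [max_eq_right (a := compositionExponent _) (by linarith),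
        max_eq_right (a := α 0) (by linarith)]
      linarith
    · have ha' : α 0 < -1 := lt_of_le_of_ne (not_lt.1 ha) (hα 0)
      rw [max_eq_left (a := compositionExponent _) (by linarith),
        max_eq_right (a := α 0) (by linarith)]
      linarith
  · push Not at htail
    have he := compositionExponent_lt_neg_one (α := Fin.tail α) (fun j => hα j.succ) htail
    by_cases ha : -1 < α 0
    · rw [compositionExponent_of_exists ⟨0, ha⟩, hsplit, if_pos ha,
        sum_eq_zero fun j _ => if_neg (htail j).not_gt,
        max_eq_left (max_le (by linarith) (by linarith))]
      ring
    · rw [compositionExponent_of_forall (Fin.forall_fin_succ.2 ⟨not_lt.1 ha, htail⟩),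
        Fin.sup'_univ_succ, ← compositionExponent_of_forall htail,
        max_eq_left (b := _ + 1) (by linarith)]

theorem exists_compositionSum_le {k : ℕ} {α : Fin (k + 1) → ℝ} (hα : ∀ j, α j ≠ -1) :
    ∃ C, 0 ≤ C ∧ ∀ ℓ : ℕ, 1 ≤ ℓ → compositionSum α ℓ ≤ C * (ℓ : ℝ) ^ compositionExponent α := by
  induction k with
  | zero =>
    exact ⟨1, zero_le_one, fun ℓ hℓ => by
      rw [compositionSum_one α hℓ, compositionExponent_one, one_mul]⟩
  | succ k ih =>
    have hα' : ∀ j, Fin.tail α j ≠ -1 := fun j => hα j.succ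
    obtain ⟨C, hC, hS⟩ := ih hα'
    obtain ⟨D, hD, hconv⟩ :=
      exists_sum_Ico_rpow_mul_rpow_sub_le (hα 0) (compositionExponent_ne_neg_one hα')
    refine ⟨C * D, by positivity, fun ℓ hℓ => ?_⟩
    rw [compositionSum_cons, compositionExponent_cons hα]
    calc ∑ m ∈ Ico 1 ℓ, (m : ℝ) ^ α 0 * compositionSum (Fin.tail α) (ℓ - m)
        ≤ ∑ m ∈ Ico 1 ℓ, (m : ℝ) ^ α 0 *
            (C * ((ℓ - m : ℕ) : ℝ) ^ compositionExponent (Fin.tail α)) := by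
          gcongr with m hm
          exact hS _ (Nat.sub_pos_of_lt (mem_Ico.mp hm).2)
      _ = C * ∑ m ∈ Ico 1 ℓ, (m : ℝ) ^ α 0 *
            ((ℓ - m : ℕ) : ℝ) ^ compositionExponent (Fin.tail α) := by
          rw [mul_sum]; simp only [mul_left_comm]
      _ ≤ C * (D * (ℓ : ℝ) ^ convExponent (α 0) (compositionExponent (Fin.tail α))) := by
          gcongr; exact hconv ℓ hℓ
      _ = C * D * (ℓ : ℝ) ^ convExponent (α 0) (compositionExponent (Fin.tail α)) := by ring

/-- Lemma on sums over compositions: if no `α_j` equals `-1` and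
`s = #{j : α_j > -1}`, then `∑_{ℓ_0+⋯+ℓ_t=ℓ} ℓ_0^{α_0} ⋯ ℓ_t^{α_t}
= O(ℓ^{s-1+∑_{α_j>-1} α_j})` (and `= O(ℓ^{max_j α_j})` in the degenerate case `s = 0`). -/
theorem stmt_13 (t : ℕ) (α : Fin (t + 1) → ℝ) (hα : ∀ j, α j ≠ -1) :
    (fun ℓ : ℕ =>
        ∑ f ∈ (Fintype.piFinset fun _ : Fin (t + 1) => Finset.Icc 1 ℓ).filter
            (fun f => ∑ i, f i = ℓ),
          ∏ i, (f i : ℝ) ^ (α i)) =O[atTop]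
      (fun ℓ : ℕ =>
        (ℓ : ℝ) ^
          (if (Finset.univ.filter fun j => -1 < α j).Nonempty then
            ((Finset.univ.filter fun j => -1 < α j).card : ℝ) - 1 +
              ∑ j ∈ Finset.univ.filter (fun j => -1 < α j), α j
          else Finset.univ.sup' Finset.univ_nonempty α)) := by
  show (fun ℓ => compositionSum α ℓ) =O[atTop] fun ℓ : ℕ => (ℓ : ℝ) ^ compositionExponent α
  obtain ⟨C, -, hC⟩ := exists_compositionSum_le hα
  refine IsBigO.of_bound C ?_
  filter_upwards [eventually_ge_atTop 1] with ℓ hℓ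
  rw [Real.norm_of_nonneg (compositionSum_nonneg α ℓ), Real.norm_of_nonneg (by positivity)]
  exact hC ℓ hℓ
end

section
/- Let t ≥ 1 and let α_0,…,α_t be real numbers all strictly less than −1, and let α = max_j α_j. Then for all integers n ≥ t+1, Σ_{ℓ_0+⋯+ℓ_t = n} ℓ_0^{α_0}⋯ℓ_t^{α_t} = O(n^{α}), where the sum is over positive integers ℓ_j. -/
open Filter Asymptotics

set_option maxHeartbeats 1000000 in
/-- If `t ≥ 1` and all `α_j < -1`, then `∑_{ℓ_0+⋯+ℓ_t=n} ℓ_0^{α_0}⋯ℓ_t^{α_t} = O(n^α)`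
where `α = max_j α_j`. -/
theorem stmt_14 (t : ℕ) (ht : 1 ≤ t) (α : Fin (t + 1) → ℝ) (hα : ∀ j, α j < -1) :
    (fun n : ℕ =>
        ∑ f ∈ (Fintype.piFinset fun _ : Fin (t + 1) => Finset.Icc 1 n).filter
            (fun f => ∑ i, f i = n),
          ∏ i, (f i : ℝ) ^ (α i)) =O[atTop]
      (fun n : ℕ => (n : ℝ) ^ (Finset.univ.sup' Finset.univ_nonempty α)) := by
  set αm := Finset.univ.sup' Finset.univ_nonempty α with hαm_def
  have hαm : αm < -1 := (Finset.sup'_lt_iff _).mpr fun j _ => hα j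
  have hαm0 : αm ≤ 0 := by linarith
  have hle : ∀ j, α j ≤ αm := fun j => Finset.le_sup' α (Finset.mem_univ j)
  have hS : Summable (fun m : ℕ => (m : ℝ) ^ αm) := Real.summable_nat_rpow.mpr hαm
  set S : ℝ := ∑' m : ℕ, (m : ℝ) ^ αm with hS_def
  have hS0 : 0 ≤ S := tsum_nonneg fun m => Real.rpow_nonneg (Nat.cast_nonneg m) _
  set C1 : ℝ := ((t : ℝ) + 1) ^ (-αm) with hC1_def
  have hC10 : 0 ≤ C1 := Real.rpow_nonneg (by positivity) _
  rw [isBigO_iff]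
  refine ⟨((t : ℝ) + 1) * C1 * S ^ (t + 1), ?_⟩
  filter_upwards [eventually_ge_atTop (t + 1)] with n hn
  have hn1 : 1 ≤ n := le_trans (by omega) hn
  have hnpos : (0 : ℝ) < (n : ℝ) := by exact_mod_cast Nat.lt_of_lt_of_le (by omega) hn
  have hnα0 : 0 ≤ (n : ℝ) ^ αm := Real.rpow_nonneg hnpos.le _
  set A := (Fintype.piFinset fun _ : Fin (t + 1) => Finset.Icc 1 n).filter
      (fun f => ∑ i, f i = n) with hA_def
  have hmem : ∀ f ∈ A, (∀ i, 1 ≤ f i ∧ f i ≤ n) ∧ ∑ i, f i = n := by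
    intro f hf
    rw [hA_def, Finset.mem_filter, Fintype.mem_piFinset] at hf
    exact ⟨fun i => Finset.mem_Icc.mp (hf.1 i), hf.2⟩
  have hsum0 : 0 ≤ ∑ f ∈ A, ∏ i, (f i : ℝ) ^ (α i) :=
    Finset.sum_nonneg fun f _ => Finset.prod_nonneg fun i _ =>
      Real.rpow_nonneg (Nat.cast_nonneg _) _
  rw [Real.norm_eq_abs, Real.norm_eq_abs, abs_of_nonneg hsum0, abs_of_nonneg hnα0]
  -- partial sum bound
  have hT : ∑ m ∈ Finset.Icc 1 n, (m : ℝ) ^ αm ≤ S :=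
    Summable.sum_le_tsum _ (fun m _ => Real.rpow_nonneg (Nat.cast_nonneg m) _) hS
  have hT0 : 0 ≤ ∑ m ∈ Finset.Icc 1 n, (m : ℝ) ^ αm :=
    Finset.sum_nonneg fun m _ => Real.rpow_nonneg (Nat.cast_nonneg m) _
  -- the key bound for a fixed index j
  have key : ∀ j : Fin (t + 1),
      ∑ f ∈ A.filter (fun f => n ≤ (t + 1) * f j), ∏ i, (f i : ℝ) ^ (α i)
        ≤ C1 * (n : ℝ) ^ αm * S ^ (t + 1) := by
    intro j
    have termbound : ∀ f ∈ A.filter (fun f => n ≤ (t + 1) * f j),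
        ∏ i, (f i : ℝ) ^ (α i)
          ≤ (C1 * (n : ℝ) ^ αm) * ∏ i, ((Function.update f j 1 i : ℕ) : ℝ) ^ αm := by
      intro f hf
      rw [Finset.mem_filter] at hf
      have hfi := (hmem f hf.1).1
      have hfj := hf.2
      have h1fj : (1 : ℝ) ≤ (f j : ℝ) := by exact_mod_cast (hfi j).1
      have hdiv : (n : ℝ) / ((t : ℝ) + 1) ≤ (f j : ℝ) := by
        rw [div_le_iff₀ (by positivity)]
        calc (n : ℝ) ≤ ((t + 1) * f j : ℕ) := by exact_mod_cast hfj
          _ = (f j : ℝ) * ((t : ℝ) + 1) := by push_cast; ring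
      have hdivpos : (0 : ℝ) < (n : ℝ) / ((t : ℝ) + 1) := by positivity
      have hjj : (f j : ℝ) ^ (α j) ≤ C1 * (n : ℝ) ^ αm := by
        calc (f j : ℝ) ^ (α j) ≤ (f j : ℝ) ^ αm :=
              Real.rpow_le_rpow_of_exponent_le h1fj (hle j)
          _ ≤ ((n : ℝ) / ((t : ℝ) + 1)) ^ αm :=
              Real.rpow_le_rpow_of_nonpos hdivpos hdiv hαm0
          _ = (n : ℝ) ^ αm / ((t : ℝ) + 1) ^ αm :=
              Real.div_rpow hnpos.le (by positivity : (0:ℝ) ≤ (t:ℝ) + 1) αm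
          _ = C1 * (n : ℝ) ^ αm := by
              rw [hC1_def, Real.rpow_neg (by positivity)]
              field_simp
      calc ∏ i, (f i : ℝ) ^ (α i)
          = (f j : ℝ) ^ (α j) * ∏ i ∈ Finset.univ.erase j, (f i : ℝ) ^ (α i) :=
            (Finset.mul_prod_erase _ _ (Finset.mem_univ j)).symm
        _ ≤ (C1 * (n : ℝ) ^ αm) * ∏ i ∈ Finset.univ.erase j, (f i : ℝ) ^ αm := by
            apply mul_le_mul hjj
            · apply Finset.prod_le_prod
              · exact fun i _ => Real.rpow_nonneg (Nat.cast_nonneg _) _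
              · intro i _
                exact Real.rpow_le_rpow_of_exponent_le
                  (by exact_mod_cast (hfi i).1) (hle i)
            · exact Finset.prod_nonneg fun i _ =>
                Real.rpow_nonneg (Nat.cast_nonneg _) _
            · positivity
        _ = (C1 * (n : ℝ) ^ αm) * ∏ i, ((Function.update f j 1 i : ℕ) : ℝ) ^ αm := by
            congr 1
            rw [← Finset.mul_prod_erase _ _ (Finset.mem_univ j)]
            rw [Function.update_self, Nat.cast_one, Real.one_rpow, one_mul]
            exact Finset.prod_congr rfl fun i hi => by
              rw [Function.update_of_ne (Finset.ne_of_mem_erase hi)]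
    have himg : ∑ f ∈ A.filter (fun f => n ≤ (t + 1) * f j),
        ∏ i, ((Function.update f j 1 i : ℕ) : ℝ) ^ αm ≤ S ^ (t + 1) := by
      have hinj : ∀ f ∈ A.filter (fun f => n ≤ (t + 1) * f j),
          ∀ g ∈ A.filter (fun f => n ≤ (t + 1) * f j),
          Function.update f j 1 = Function.update g j 1 → f = g := by
        intro f hf g hg heq
        have hoff : ∀ i, i ≠ j → f i = g i := by
          intro i hij
          have := congrFun heq i
          rwa [Function.update_of_ne hij, Function.update_of_ne hij] at this
        have hsf := (hmem f (Finset.mem_filter.mp hf).1).2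
        have hsg := (hmem g (Finset.mem_filter.mp hg).1).2
        have herase : ∑ i ∈ Finset.univ.erase j, f i = ∑ i ∈ Finset.univ.erase j, g i :=
          Finset.sum_congr rfl fun i hi => hoff i (Finset.ne_of_mem_erase hi)
        have hfj : f j + ∑ i ∈ Finset.univ.erase j, f i = n := by
          rw [Finset.add_sum_erase _ _ (Finset.mem_univ j)]; exact hsf
        have hgj : g j + ∑ i ∈ Finset.univ.erase j, g i = n := by
          rw [Finset.add_sum_erase _ _ (Finset.mem_univ j)]; exact hsg
        have : f j = g j := by omega
        funext i
        by_cases hij : i = j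
        · rw [hij]; exact this
        · exact hoff i hij
      have hsub : (A.filter (fun f => n ≤ (t + 1) * f j)).image
          (fun f => Function.update f j 1)
          ⊆ Fintype.piFinset fun _ : Fin (t + 1) => Finset.Icc 1 n := by
        intro g hg
        rw [Finset.mem_image] at hg
        obtain ⟨f, hf, rfl⟩ := hg
        rw [Fintype.mem_piFinset]
        intro i
        by_cases hij : i = j
        · rw [hij, Function.update_self]
          exact Finset.mem_Icc.mpr ⟨le_refl 1, hn1⟩
        · rw [Function.update_of_ne hij]
          have := (hmem f (Finset.mem_filter.mp hf).1).1 i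
          exact Finset.mem_Icc.mpr this
      calc ∑ f ∈ A.filter (fun f => n ≤ (t + 1) * f j),
              ∏ i, ((Function.update f j 1 i : ℕ) : ℝ) ^ αm
          = ∑ g ∈ (A.filter (fun f => n ≤ (t + 1) * f j)).image
              (fun f => Function.update f j 1), ∏ i, ((g i : ℕ) : ℝ) ^ αm :=
            by rw [Finset.sum_image (f := fun h => ∏ i, ((h i : ℕ) : ℝ) ^ αm) hinj]
        _ ≤ ∑ g ∈ Fintype.piFinset (fun _ : Fin (t + 1) => Finset.Icc 1 n),
              ∏ i, ((g i : ℕ) : ℝ) ^ αm :=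
            Finset.sum_le_sum_of_subset_of_nonneg hsub fun g _ _ =>
              Finset.prod_nonneg fun i _ => Real.rpow_nonneg (Nat.cast_nonneg _) _
        _ = ∏ _i : Fin (t + 1), ∑ m ∈ Finset.Icc 1 n, ((m : ℕ) : ℝ) ^ αm :=
            Finset.sum_prod_piFinset (Finset.Icc 1 n) (fun _ m => ((m : ℕ) : ℝ) ^ αm)
        _ = (∑ m ∈ Finset.Icc 1 n, (m : ℝ) ^ αm) ^ (t + 1) := by
            rw [Finset.prod_const, Finset.card_univ, Fintype.card_fin]
        _ ≤ S ^ (t + 1) := pow_le_pow_left₀ hT0 hT _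
    calc ∑ f ∈ A.filter (fun f => n ≤ (t + 1) * f j), ∏ i, (f i : ℝ) ^ (α i)
        ≤ ∑ f ∈ A.filter (fun f => n ≤ (t + 1) * f j),
            (C1 * (n : ℝ) ^ αm) * ∏ i, ((Function.update f j 1 i : ℕ) : ℝ) ^ αm :=
          Finset.sum_le_sum termbound
      _ = (C1 * (n : ℝ) ^ αm) * ∑ f ∈ A.filter (fun f => n ≤ (t + 1) * f j),
            ∏ i, ((Function.update f j 1 i : ℕ) : ℝ) ^ αm := by
          rw [Finset.mul_sum]
      _ ≤ (C1 * (n : ℝ) ^ αm) * S ^ (t + 1) := by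
          apply mul_le_mul_of_nonneg_left himg (by positivity)
      _ = C1 * (n : ℝ) ^ αm * S ^ (t + 1) := by ring
  -- assemble
  calc ∑ f ∈ A, ∏ i, (f i : ℝ) ^ (α i)
      ≤ ∑ f ∈ A, ∑ j : Fin (t + 1),
          (if n ≤ (t + 1) * f j then ∏ i, (f i : ℝ) ^ (α i) else 0) := by
        apply Finset.sum_le_sum
        intro f hf
        have hjex : ∃ j, n ≤ (t + 1) * f j := by
          by_contra h
          push_neg at h
          have hlt := Finset.sum_lt_sum_of_nonempty Finset.univ_nonempty
            (f := fun j => (t + 1) * f j) (g := fun _ => n) (fun j _ => h j)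
          rw [← Finset.mul_sum, (hmem f hf).2, Finset.sum_const, Finset.card_univ,
            Fintype.card_fin, smul_eq_mul] at hlt
          exact lt_irrefl _ hlt
        obtain ⟨j, hj⟩ := hjex
        have hnn : ∀ k : Fin (t + 1),
            (0:ℝ) ≤ if n ≤ (t + 1) * f k then ∏ i, (f i : ℝ) ^ (α i) else 0 := by
          intro k
          split
          · exact Finset.prod_nonneg fun i _ =>
              Real.rpow_nonneg (Nat.cast_nonneg _) _
          · exact le_refl 0
        have := Finset.single_le_sum
          (f := fun k => if n ≤ (t + 1) * f k then ∏ i, (f i : ℝ) ^ (α i) else 0)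
          (fun k _ => hnn k) (Finset.mem_univ j)
        simpa only [if_pos hj] using this
    _ = ∑ j : Fin (t + 1), ∑ f ∈ A.filter (fun f => n ≤ (t + 1) * f j),
          ∏ i, (f i : ℝ) ^ (α i) := by
        rw [Finset.sum_comm]
        exact Finset.sum_congr rfl fun j _ => (Finset.sum_filter _ _).symm
    _ ≤ ∑ _j : Fin (t + 1), C1 * (n : ℝ) ^ αm * S ^ (t + 1) :=
        Finset.sum_le_sum fun j _ => key j
    _ = ((t : ℝ) + 1) * C1 * S ^ (t + 1) * (n : ℝ) ^ αm := by
        rw [Finset.sum_const, Finset.card_univ, Fintype.card_fin]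
        ring
end
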